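/- Let y ∈ A^ℤ be uniformly recurrent and let p ≥ 1 be an integer. Suppose there exist k ∈ ℤ, n_0 ∈ ℤ and a letter a ∈ A such that y_{k+np} = a for all n > n_0. Then for every z in the subshift generated by y (the closure of the shift-orbit of y in A^ℤ), there exist i with 0 ≤ i < p and a letter b ∈ A such that z_{i+np} = b for all n ∈ ℤ. -/

import Mathlib

/-!
If `y` takes the value `a` on a whole residue class modulo `p`, then so does every shift of `y`,
and this property is closed in `A^ℤ`, so it passes to the whole orbit closure. Uniform recurrence
supplies such a residue class for `y` itself: every window `[-Lp, (L+1)p)` of `y` reappears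
arbitrarily far to the right, in particular inside the region where `y (k + n p) = a`; since only
`p` residues are available, one of them works for all `L`.
-/

/-- The `k`-th power of the shift: `(S^k x) n = x (n + k)`. -/
def shiftZ {A : Type*} (k : ℤ) (x : ℤ → A) : ℤ → A := fun n => x (n + k)

/-- `y` is uniformly recurrent. -/
def UniformlyRecurrent {A : Type*} (y : ℤ → A) : Prop :=
  ∀ (m : ℕ) (i : ℤ), ∃ B : ℕ, ∀ k : ℤ, ∃ j : ℤ, k ≤ j ∧ j ≤ k + B ∧
    ∀ t : Fin m, y (j + t) = y (i + t)

lemma Int.exists_fin_eq_add_mul {p : ℕ} (hp : 0 < p) (m : ℤ) :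
    ∃ (i : Fin p) (q : ℤ), m = i + q * p := by
  have hp' : (0 : ℤ) < p := by exact_mod_cast hp
  have hnonneg := Int.emod_nonneg m hp'.ne'
  refine ⟨⟨(m % p).toNat, by have := Int.emod_lt_of_pos m hp'; omega⟩, m / p, ?_⟩
  have := Int.mul_ediv_add_emod m p
  simp only [Int.toNat_of_nonneg hnonneg]
  linarith

lemma exists_forall_of_forall_exists_forall_natAbs_le {ι : Type*} [Finite ι] {P : ι → ℤ → Prop}
    (h : ∀ L : ℕ, ∃ i, ∀ n : ℤ, n.natAbs ≤ L → P i n) : ∃ i, ∀ n, P i n := by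
  by_contra! hbad
  choose f hf using hbad
  obtain ⟨L, hL⟩ := Finite.bddAbove_range fun i => (f i).natAbs
  obtain ⟨i, hi⟩ := h L
  exact hf i (hi (f i) (hL ⟨i, rfl⟩))

lemma UniformlyRecurrent.exists_ge_forall_eq {A : Type*} {y : ℤ → A} (hur : UniformlyRecurrent y)
    (m : ℕ) (i K : ℤ) : ∃ j ≥ K, ∀ t : ℤ, 0 ≤ t → t < m → y (j + t) = y (i + t) := by
  obtain ⟨B, hB⟩ := hur m i
  obtain ⟨j, hKj, -, hj⟩ := hB K
  refine ⟨j, hKj, fun t ht0 htm => ?_⟩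
  lift t to ℕ using ht0
  exact hj ⟨t, by omega⟩

section ResidueClass

variable {A : Type*} (p : ℕ) (a : A)

def HasConstantResidueClass (w : ℤ → A) : Prop :=
  ∃ i : Fin p, ∀ n : ℤ, w (i + n * p) = a

lemma isClosed_setOf_hasConstantResidueClass [TopologicalSpace A] [T1Space A] :
    IsClosed {w : ℤ → A | HasConstantResidueClass p a w} := by
  have : {w : ℤ → A | HasConstantResidueClass p a w} =
      ⋃ i : Fin p, ⋂ n : ℤ, (fun w : ℤ → A => w (i + n * p)) ⁻¹' {a} := by
    ext w
    simp [HasConstantResidueClass]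
  rw [this]
  exact isClosed_iUnion_of_finite fun i => isClosed_iInter fun n =>
    isClosed_singleton.preimage (continuous_apply _)

variable {p a}

lemma HasConstantResidueClass.shiftZ (hp : 0 < p) {w : ℤ → A} (hw : HasConstantResidueClass p a w)
    (j : ℤ) : HasConstantResidueClass p a (shiftZ j w) := by
  obtain ⟨i, hi⟩ := hw
  obtain ⟨r, q, hiq⟩ := Int.exists_fin_eq_add_mul hp (i - j)
  refine ⟨r, fun n => ?_⟩
  have : (r : ℤ) + n * p + j = i + (n - q) * p := by linarith
  simp only [_root_.shiftZ, this, hi]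

lemma UniformlyRecurrent.hasConstantResidueClass {y : ℤ → A} (hur : UniformlyRecurrent y)
    (hp : 0 < p) {k n0 : ℤ} (hconst : ∀ n : ℤ, n0 < n → y (k + n * p) = a) :
    HasConstantResidueClass p a y := by
  have hp' : (0 : ℤ) < p := by exact_mod_cast hp
  refine exists_forall_of_forall_exists_forall_natAbs_le fun L => ?_
  obtain ⟨j, hj, hwindow⟩ :=
    hur.exists_ge_forall_eq ((2 * L + 1) * p) (-L * p) (k + (n0 + 1) * p)
  obtain ⟨r, q, hkj⟩ := Int.exists_fin_eq_add_mul hp (k - j)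
  have hq : q ≤ -(n0 + 1) := by
    have : q * p ≤ -(n0 + 1) * p := by linarith [r.2]
    exact le_of_mul_le_mul_right this hp'
  refine ⟨r, fun n hn => ?_⟩
  have hnL : -(L : ℤ) ≤ n ∧ n ≤ L := by omega
  have hr : (r : ℤ) < p := by exact_mod_cast r.2
  -- `r + n p` sits at position `r + (n + L) p` of the window, whose copy lies in the constant region
  have hcopy := hwindow (r + (n + L) * p) (by nlinarith) (by push_cast; nlinarith)
  calc y (r + n * p) = y (-L * p + (r + (n + L) * p)) := by congr 1; ring
    _ = y (k + (n + L - q) * p) := by rw [← hcopy]; congr 1; linarith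
    _ = a := hconst _ (by omega)

end ResidueClass

theorem eventually_constant_arithmetic_subsequence_general
    {A : Type*} [TopologicalSpace A] [DiscreteTopology A]
    (y : ℤ → A) (hur : UniformlyRecurrent y)
    (p : ℕ) (hp : 1 ≤ p)
    (k n0 : ℤ) (a : A) (hconst : ∀ n : ℤ, n0 < n → y (k + n * p) = a)
    (z : ℤ → A) (hz : z ∈ closure {w : ℤ → A | ∃ j : ℤ, w = shiftZ j y}) :
    ∃ i : ℕ, i < p ∧ ∃ b : A, ∀ n : ℤ, z ((i : ℤ) + n * p) = b := by
  have hy : HasConstantResidueClass p a y := hur.hasConstantResidueClass hp hconst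
  have horbit : {w : ℤ → A | ∃ j : ℤ, w = shiftZ j y} ⊆ {w | HasConstantResidueClass p a w} := by
    rintro _ ⟨j, rfl⟩
    exact hy.shiftZ hp j
  obtain ⟨i, hi⟩ := closure_minimal horbit (isClosed_setOf_hasConstantResidueClass p a) hz
  exact ⟨i, i.isLt, a, hi⟩

/-- If a uniformly recurrent sequence `y` has a subsequence `(y_{k+np})_{n>n₀}` that is
eventually constant along an arithmetic progression of common difference `p`, then
every `z` in the subshift generated by `y` has a constant arithmetic subsequence
`(z_{i+np})_{n∈ℤ}` for some `0 ≤ i < p`. -/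
theorem eventually_constant_arithmetic_subsequence
    {A : Type*} [Fintype A] [TopologicalSpace A] [DiscreteTopology A]
    (y : ℤ → A) (hur : UniformlyRecurrent y)
    (p : ℕ) (hp : 1 ≤ p)
    (k n0 : ℤ) (a : A) (hconst : ∀ n : ℤ, n0 < n → y (k + n * p) = a)
    (z : ℤ → A) (hz : z ∈ closure {w : ℤ → A | ∃ j : ℤ, w = shiftZ j y}) :
    ∃ i : ℕ, i < p ∧ ∃ b : A, ∀ n : ℤ, z ((i : ℤ) + n * p) = b :=
  eventually_constant_arithmetic_subsequence_general y hur p hp k n0 a hconst z hz
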